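/- Soundness of the Augmentation axiom: if B ⊆ A*, then B ∪ C ⊆ (A ∪ C)* for every C ⊆ 𝒜. -/

import Mathlib

open Classical Finset

/-- Peer pressure of set `A` on agent `b`: `‖A‖_b = Σ_{a∈A} w(a,b)`. -/
noncomputable def pressure {𝒜 : Type*} [Fintype 𝒜] (w : 𝒜 → 𝒜 → ℝ)
    (A : Finset 𝒜) (b : 𝒜) : ℝ :=
  ∑ a ∈ A, w a b

/-- Diffusion iterates: `A^0 = A`, `A^{k+1} = A^k ∪ {x : ‖A^k‖_x ≥ θ(x)}`. -/
noncomputable def iterAdopt {𝒜 : Type*} [Fintype 𝒜] (w : 𝒜 → 𝒜 → ℝ) (θ : 𝒜 → ℝ)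
    (A : Finset 𝒜) : ℕ → Finset 𝒜
  | 0 => A
  | k + 1 => iterAdopt w θ A k ∪
      Finset.univ.filter (fun x => θ x ≤ pressure w (iterAdopt w θ A k) x)

/-- Star closure: `A* = ⋃_{k≥0} A^k`. -/
noncomputable def starAdopt {𝒜 : Type*} [Fintype 𝒜] (w : 𝒜 → 𝒜 → ℝ) (θ : 𝒜 → ℝ)
    (A : Finset 𝒜) : Finset 𝒜 :=
  Finset.univ.filter (fun x => ∃ k : ℕ, x ∈ iterAdopt w θ A k)

/-! With nonnegative weights the pressure of a set only grows when the set grows, so every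
iterate `A^k`, and hence `A*`, is monotone in the seed set `A`. Thus `A* ⊆ (A ∪ C)*`, while
`C ⊆ (A ∪ C)^0`. -/

section Monotonicity

variable {𝒜 : Type*} [Fintype 𝒜] {w : 𝒜 → 𝒜 → ℝ} {θ : 𝒜 → ℝ}

theorem pressure_mono (hw : ∀ a b, 0 ≤ w a b) {A A' : Finset 𝒜} (h : A ⊆ A') (x : 𝒜) :
    pressure w A x ≤ pressure w A' x :=
  sum_le_sum_of_subset_of_nonneg h fun a _ _ => hw a x

theorem iterAdopt_mono (hw : ∀ a b, 0 ≤ w a b) {A A' : Finset 𝒜} (h : A ⊆ A') (k : ℕ) :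
    iterAdopt w θ A k ⊆ iterAdopt w θ A' k := by
  induction k with
  | zero => exact h
  | succ k ih =>
    refine union_subset_union ih fun x hx => ?_
    simp only [mem_filter, mem_univ, true_and] at hx ⊢
    exact hx.trans (pressure_mono hw ih x)

theorem mem_starAdopt {A : Finset 𝒜} {x : 𝒜} :
    x ∈ starAdopt w θ A ↔ ∃ k, x ∈ iterAdopt w θ A k := by
  simp [starAdopt]

theorem subset_starAdopt (A : Finset 𝒜) : A ⊆ starAdopt w θ A :=
  fun _ hx => mem_starAdopt.2 ⟨0, hx⟩

theorem starAdopt_mono (hw : ∀ a b, 0 ≤ w a b) {A A' : Finset 𝒜} (h : A ⊆ A') :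
    starAdopt w θ A ⊆ starAdopt w θ A' := fun _ hx =>
  let ⟨k, hk⟩ := mem_starAdopt.1 hx
  mem_starAdopt.2 ⟨k, iterAdopt_mono hw h k hk⟩

end Monotonicity

theorem stmt8_general {𝒜 : Type*} [Fintype 𝒜] (w : 𝒜 → 𝒜 → ℝ) (θ : 𝒜 → ℝ)
    (hw : ∀ a b, 0 ≤ w a b) (A B C : Finset 𝒜)
    (hAB : B ⊆ starAdopt w θ A) :
    B ∪ C ⊆ starAdopt w θ (A ∪ C) :=
  union_subset (hAB.trans (starAdopt_mono hw subset_union_left))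
    (subset_union_right.trans (subset_starAdopt _))

theorem stmt8 {𝒜 : Type*} [Fintype 𝒜] (w : 𝒜 → 𝒜 → ℝ) (θ : 𝒜 → ℝ)
    (hw : ∀ a b, 0 ≤ w a b) (hθ : ∀ a, 0 ≤ θ a) (A B C : Finset 𝒜)
    (hAB : B ⊆ starAdopt w θ A) :
    B ∪ C ⊆ starAdopt w θ (A ∪ C) :=
  stmt8_general w θ hw A B C hAB
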